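/- For all 0 < Λ < M ≤ P, all 0 ≤ η ≤ M, and every natural number k, there exists C_k > 0 such that ∫_Λ^M (log₊(P/λ))^k / (λ+η) dλ < C_k (1 + (log₊(P/(Λ+η)))^{k+1}). -/

import Mathlib

/-! Split the integral at `η`. For `l ≥ η` we have `l + η ≤ 2 l`, hence
`log (P / l) ≤ log (2 P / (l + η))`, and `log (2 P / x) ^ k / x` has the explicit primitive
`-log (2 P / x) ^ (k + 1) / (k + 1)`. For `l ≤ η` we bound `1 / (l + η) ≤ 1 / η` and write
`log (P / l) = log (P / η) + log (η / l)`; the second summand satisfies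
`log (η / l) ^ k ≤ 2 ^ k k! √(η / l)`, and `∫₀^η √(η / l) dl = 2 η` cancels the
factor `1 / η`. Both `log (P / η)` (when `Λ < η`) and `log (2 P / (Λ + η))` are at most
`1 + log₊ (P / (Λ + η))`. -/

noncomputable def logPlus (x : ℝ) : ℝ := Real.log (max 1 x)

open Real intervalIntegral Set
open MeasureTheory (volume)
open scoped Nat

lemma logPlus_nonneg (x : ℝ) : 0 ≤ logPlus x := log_nonneg (le_max_left 1 x)

lemma logPlus_of_one_le {x : ℝ} (hx : 1 ≤ x) : logPlus x = log x := by
  rw [logPlus, max_eq_right hx]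

lemma log_two_mul_le_one_add_logPlus {x : ℝ} (hx : 0 < x) : log (2 * x) ≤ 1 + logPlus x := by
  rw [log_mul two_ne_zero hx.ne', logPlus]
  linarith [log_two_lt_d9, log_le_log hx (le_max_right 1 x)]

lemma one_add_pow_le {a : ℝ} (ha : 0 ≤ a) (n : ℕ) : (1 + a) ^ n ≤ 2 ^ n * (1 + a ^ n) := by
  calc (1 + a) ^ n ≤ 2 ^ (n - 1) * (1 ^ n + a ^ n) := add_pow_le zero_le_one ha n
    _ ≤ 2 ^ n * (1 + a ^ n) := by
        rw [one_pow]
        gcongr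
        exacts [one_le_two, n.sub_le 1]

lemma log_pow_le_sqrt {x : ℝ} (hx : 1 ≤ x) (k : ℕ) : log x ^ k ≤ 2 ^ k * k ! * √x := by
  have h := Real.pow_div_factorial_le_exp _ (div_nonneg (log_nonneg hx) zero_le_two) k
  rw [div_le_iff₀ (by positivity), div_pow, div_le_iff₀ (by positivity)] at h
  rw [sqrt_eq_rpow, rpow_def_of_pos (by linarith), ← div_eq_mul_one_div]
  linarith

lemma log_div_pow_le {P η l : ℝ} (hl : 0 < l) (hlη : l ≤ η) (hηP : η ≤ P) (k : ℕ) :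
    log (P / l) ^ k ≤ 2 ^ k * log (P / η) ^ k + 4 ^ k * k ! * √(η / l) := by
  have hη : 0 < η := hl.trans_le hlη
  have hs : 0 ≤ log (P / η) := log_nonneg ((one_le_div hη).mpr hηP)
  have hηl : 1 ≤ η / l := (one_le_div hl).mpr hlη
  have hsplit : log (P / l) = log (P / η) + log (η / l) := by
    rw [← log_mul (div_pos (hη.trans_le hηP) hη).ne' (by positivity)]
    field_simp
  calc log (P / l) ^ k ≤ 2 ^ (k - 1) * (log (P / η) ^ k + log (η / l) ^ k) :=
        hsplit ▸ add_pow_le hs (log_nonneg hηl) k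
    _ ≤ 2 ^ k * (log (P / η) ^ k + 2 ^ k * k ! * √(η / l)) := by
        have := pow_nonneg (log_nonneg hηl) k
        gcongr
        · exact one_le_two
        · exact k.sub_le 1
        · exact log_pow_le_sqrt hηl k
    _ = 2 ^ k * log (P / η) ^ k + 4 ^ k * k ! * √(η / l) := by
        rw [show (4 : ℝ) = 2 * 2 by norm_num, mul_pow]
        ring

lemma intervalIntegrable_sqrt_div {a b : ℝ} (c : ℝ) (ha : 0 < a) (hab : a ≤ b) :
    IntervalIntegrable (fun l => √(c / l)) volume a b := by
  apply ContinuousOn.intervalIntegrable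
  have hne : ∀ x ∈ uIcc a b, x ≠ 0 := fun x hx => (ha.trans_le (uIcc_of_le hab ▸ hx).1).ne'
  fun_prop (disch := exact hne)

lemma integral_sqrt_div_le {a b : ℝ} (ha : 0 < a) (hab : a ≤ b) :
    ∫ l in a..b, √(b / l) ≤ 2 * b := by
  have hpos : ∀ x ∈ uIcc a b, 0 < x := fun x hx => ha.trans_le (uIcc_of_le hab ▸ hx).1
  have hderiv : ∀ x ∈ uIcc a b, HasDerivAt (fun l => 2 * √b * √l) (√(b / x)) x := by
    intro x hx
    refine ((hasDerivAt_sqrt (hpos x hx).ne').const_mul (2 * √b)).congr_deriv ?_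
    rw [sqrt_div' _ (hpos x hx).le]
    field_simp
  rw [integral_eq_sub_of_hasDerivAt hderiv (intervalIntegrable_sqrt_div b ha hab)]
  have hb : √b * √b = b := mul_self_sqrt (ha.le.trans hab)
  nlinarith [sqrt_nonneg a, sqrt_nonneg b]

lemma intervalIntegrable_log_div_pow_div_add {P η a b : ℝ} (hP : P ≠ 0) (hη : 0 ≤ η)
    (ha : 0 < a) (hab : a ≤ b) (k : ℕ) :
    IntervalIntegrable (fun l => log (P / l) ^ k / (l + η)) volume a b := by
  apply ContinuousOn.intervalIntegrable
  have hpos : ∀ l ∈ uIcc a b, 0 < l := fun l hl => ha.trans_le (uIcc_of_le hab ▸ hl).1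
  have hne : ∀ l ∈ uIcc a b, l ≠ 0 := fun l hl => (hpos l hl).ne'
  refine ContinuousOn.div (ContinuousOn.pow (ContinuousOn.log (by fun_prop (disch := exact hne))
    fun l hl => div_ne_zero hP (hne l hl)) k) (by fun_prop) fun l hl => ?_
  linarith [hpos l hl]

lemma integral_sub_log_pow_div_self {a b : ℝ} (ha : 0 < a) (hab : a ≤ b) (B : ℝ) (k : ℕ) :
    ∫ x in a..b, (B - log x) ^ k / x =
      ((B - log a) ^ (k + 1) - (B - log b) ^ (k + 1)) / (k + 1) := by
  have hpos : ∀ x ∈ uIcc a b, 0 < x := fun x hx => ha.trans_le (uIcc_of_le hab ▸ hx).1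
  have hderiv : ∀ x ∈ uIcc a b,
      HasDerivAt (fun x => -(B - log x) ^ (k + 1) / (k + 1)) ((B - log x) ^ k / x) x := by
    intro x hx
    have h := (((hasDerivAt_log (hpos x hx).ne').const_sub B).pow (k + 1)).neg.div_const
      ((k : ℝ) + 1)
    refine h.congr_deriv ?_
    push_cast
    field_simp
  have hint : IntervalIntegrable (fun x => (B - log x) ^ k / x) volume a b := by
    apply ContinuousOn.intervalIntegrable
    have hne : ∀ x ∈ uIcc a b, x ≠ 0 := fun x hx => (hpos x hx).ne'
    fun_prop (disch := exact hne)
  rw [integral_eq_sub_of_hasDerivAt hderiv hint]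
  ring

lemma integral_log_div_pow_div_add_le_above {P η c M : ℝ} (hη : 0 ≤ η) (hηc : η ≤ c)
    (hc : 0 < c) (hcM : c ≤ M) (hMP : M ≤ P) (k : ℕ) :
    ∫ l in c..M, log (P / l) ^ k / (l + η) ≤ log (2 * P / (c + η)) ^ (k + 1) := by
  have hP : 0 < P := hc.trans_le (hcM.trans hMP)
  have hmono : ∫ l in c..M, log (P / l) ^ k / (l + η) ≤
      ∫ l in c..M, (log (2 * P) - log (l + η)) ^ k / (l + η) := by
    refine integral_mono_on hcM (intervalIntegrable_log_div_pow_div_add hP.ne' hη hc hcM k)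
      ?_ fun l hl => ?_
    · apply ContinuousOn.intervalIntegrable
      have hne : ∀ x ∈ uIcc c M, x + η ≠ 0 := fun x hx => by
        linarith [(uIcc_of_le hcM ▸ hx).1]
      fun_prop (disch := exact hne)
    · have hl0 : 0 < l := hc.trans_le hl.1
      have hle : P / l ≤ 2 * P / (l + η) := by
        rw [div_le_div_iff₀ hl0 (by positivity)]
        nlinarith [hl.1]
      rw [← log_div (by positivity) (by positivity)]
      have := log_nonneg ((one_le_div hl0).mpr (hl.2.trans hMP))
      gcongr
  rw [integral_comp_add_right (fun x => (log (2 * P) - log x) ^ k / x) η,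
    integral_sub_log_pow_div_self (by positivity) (by linarith),
    ← log_div (by positivity) (by positivity)] at hmono
  have hX : 0 ≤ log (2 * P / (c + η)) :=
    log_nonneg ((one_le_div (by linarith)).mpr (by linarith))
  have hY : 0 ≤ log (2 * P) - log (M + η) :=
    sub_nonneg.mpr (log_le_log (by linarith) (by linarith))
  calc _ ≤ _ := hmono
    _ ≤ log (2 * P / (c + η)) ^ (k + 1) / (k + 1) := by
        gcongr
        exact sub_le_self _ (pow_nonneg hY _)
    _ ≤ log (2 * P / (c + η)) ^ (k + 1) := div_le_self (pow_nonneg hX _) (by simp)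

lemma integral_log_div_pow_div_add_le_below {P Λ η : ℝ} (hΛ : 0 < Λ) (hΛη : Λ ≤ η)
    (hηP : η ≤ P) (k : ℕ) :
    ∫ l in Λ..η, log (P / l) ^ k / (l + η) ≤ 2 ^ k * log (P / η) ^ k + 2 * 4 ^ k * k ! := by
  have hη : 0 < η := hΛ.trans_le hΛη
  set S := 2 ^ k * log (P / η) ^ k
  set D := (4 ^ k * k ! : ℝ)
  have hsqrt := intervalIntegrable_sqrt_div η hΛ hΛη
  have hmono : ∫ l in Λ..η, log (P / l) ^ k / (l + η) ≤
      ∫ l in Λ..η, (S + D * √(η / l)) / η := by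
    refine integral_mono_on hΛη
      (intervalIntegrable_log_div_pow_div_add (hη.trans_le hηP).ne' hη.le hΛ hΛη k)
      ((intervalIntegrable_const.add (hsqrt.const_mul D)).div_const η) fun l hl => ?_
    have hl0 : 0 < l := hΛ.trans_le hl.1
    calc log (P / l) ^ k / (l + η) ≤ log (P / l) ^ k / η := by
          gcongr
          · exact pow_nonneg (log_nonneg ((one_le_div hl0).mpr (by linarith [hl.2]))) k
          · linarith
      _ ≤ (S + D * √(η / l)) / η := by gcongr; exact log_div_pow_le hl0 hl.2 hηP k
  have hS : 0 ≤ S := by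
    have := log_nonneg ((one_le_div hη).mpr hηP)
    positivity
  have hD : 0 ≤ D := by positivity
  have hI := mul_le_mul_of_nonneg_left (integral_sqrt_div_le hΛ hΛη) hD
  refine hmono.trans ?_
  rw [integral_div, integral_add intervalIntegrable_const (hsqrt.const_mul D), integral_const,
    integral_const_mul, smul_eq_mul, div_le_iff₀ hη]
  nlinarith [mul_nonneg hΛ.le hS]

lemma integral_log_div_pow_div_add_le {Λ M P η : ℝ} (hΛ : 0 < Λ) (hΛM : Λ < M)
    (hMP : M ≤ P) (hη : 0 ≤ η) (hηM : η ≤ M) (k : ℕ) :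
    ∫ l in Λ..M, log (P / l) ^ k / (l + η) ≤
      (2 ^ k + 1) * (1 + logPlus (P / (Λ + η))) ^ (k + 1) + 2 * 4 ^ k * k ! := by
  set a := logPlus (P / (Λ + η))
  have ha : 0 ≤ a := logPlus_nonneg _
  have hP : 0 < P := hΛ.trans (hΛM.trans_le hMP)
  have hw : log (2 * P / (Λ + η)) ≤ 1 + a := by
    rw [mul_div_assoc]; exact log_two_mul_le_one_add_logPlus (by positivity)
  have hD : (0 : ℝ) ≤ 2 * 4 ^ k * k ! := by positivity
  rcases le_or_gt η Λ with hηΛ | hΛη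
  · have h2a : 0 ≤ 2 ^ k * (1 + a) ^ (k + 1) := by positivity
    calc _ ≤ log (2 * P / (Λ + η)) ^ (k + 1) :=
          integral_log_div_pow_div_add_le_above hη hηΛ hΛ hΛM.le hMP k
      _ ≤ (1 + a) ^ (k + 1) :=
          pow_le_pow_left₀ (log_nonneg ((one_le_div (by positivity)).mpr (by linarith))) hw _
      _ ≤ _ := by linarith
  · have hη0 : 0 < η := hΛ.trans hΛη
    have hs : 0 ≤ log (P / η) := log_nonneg ((one_le_div hη0).mpr (hηM.trans hMP))
    have hsa : log (P / η) ≤ 1 + a := by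
      refine (log_le_log (by positivity) ?_).trans hw
      rw [div_le_div_iff₀ hη0 (by positivity)]
      nlinarith
    rw [← integral_add_adjacent_intervals
      (intervalIntegrable_log_div_pow_div_add hP.ne' hη hΛ hΛη.le k)
      (intervalIntegrable_log_div_pow_div_add hP.ne' hη hη0 hηM k)]
    have h1 := integral_log_div_pow_div_add_le_below hΛ hΛη.le (hηM.trans hMP) k
    have h2 := integral_log_div_pow_div_add_le_above hη le_rfl hη0 hηM hMP k
    rw [show 2 * P / (η + η) = P / η by field_simp; ring] at h2
    have h3 : log (P / η) ^ k ≤ (1 + a) ^ (k + 1) :=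
      (pow_le_pow_left₀ hs hsa k).trans (pow_le_pow_right₀ (by linarith) k.le_succ)
    have h4 : log (P / η) ^ (k + 1) ≤ (1 + a) ^ (k + 1) := pow_le_pow_left₀ hs hsa _
    have h5 := mul_le_mul_of_nonneg_left h3 (by positivity : (0 : ℝ) ≤ 2 ^ k)
    linarith

theorem stmt_7 (k : ℕ) :
    ∃ C : ℝ, 0 < C ∧ ∀ Λ M P η : ℝ, 0 < Λ → Λ < M → M ≤ P → 0 ≤ η → η ≤ M →
      (∫ l in Λ..M, (logPlus (P / l)) ^ k / (l + η)) <
        C * (1 + (logPlus (P / (Λ + η))) ^ (k + 1)) := by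
  refine ⟨(2 ^ k + 1) * 2 ^ (k + 1) + 2 * 4 ^ k * k ! + 1, by positivity, ?_⟩
  intro Λ M P η hΛ hΛM hMP hη hηM
  have hlogPlus : ∫ l in Λ..M, logPlus (P / l) ^ k / (l + η) =
      ∫ l in Λ..M, log (P / l) ^ k / (l + η) := by
    refine integral_congr fun l hl => ?_
    rw [uIcc_of_le hΛM.le] at hl
    have hl0 : 0 < l := hΛ.trans_le hl.1
    simp only [logPlus_of_one_le ((one_le_div hl0).mpr (hl.2.trans hMP))]
  set a := logPlus (P / (Λ + η))
  have ha : 0 ≤ a := logPlus_nonneg _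
  rw [hlogPlus]
  calc _ ≤ (2 ^ k + 1) * (1 + a) ^ (k + 1) + 2 * 4 ^ k * k ! :=
        integral_log_div_pow_div_add_le hΛ hΛM hMP hη hηM k
    _ ≤ ((2 ^ k + 1) * 2 ^ (k + 1) + 2 * 4 ^ k * k !) * (1 + a ^ (k + 1)) := by
        have h1 := mul_le_mul_of_nonneg_left (one_add_pow_le ha (k + 1))
          (by positivity : (0 : ℝ) ≤ 2 ^ k + 1)
        have h2 := le_mul_of_one_le_right (by positivity : (0 : ℝ) ≤ 2 * 4 ^ k * k !)
          (le_add_of_nonneg_right (pow_nonneg ha (k + 1)))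
        linarith
    _ < _ := mul_lt_mul_of_pos_right (lt_add_one _) (by positivity)
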